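/- arXiv:2003.13970 — 6 statements merged into one kernel-verified Lean document; each statement's English description precedes it below -/
import Mathlib

section
/- Let a, b, c, d be nonnegative integers with |a - b| ≤ c and |a - b| ≤ d. Then equality 2a+2b+c+d = min(3a+b+2c+d, a+3b+2c+d, 3a+b+c+2d, a+3b+c+2d) holds (i.e., some Whitehead automorphism preserves the length) if and only if |a - b| = c or |a - b| = d. -/
/-- Level-transformation criterion: under minimality `|a-b| ≤ c`, `|a-b| ≤ d`,
the length `2a+2b+c+d` equals the minimum of the four Whitehead-transformed lengths
iff `|a-b| = c` or `|a-b| = d`. -/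
theorem stmt2 (a b c d : ℤ) (ha : 0 ≤ a) (hb : 0 ≤ b) (hc : 0 ≤ c) (hd : 0 ≤ d)
    (h1 : |a - b| ≤ c) (h2 : |a - b| ≤ d) :
    2*a + 2*b + c + d =
      min (min (3*a + b + 2*c + d) (a + 3*b + 2*c + d))
          (min (3*a + b + c + 2*d) (a + 3*b + c + 2*d)) ↔
    (|a - b| = c ∨ |a - b| = d) := by
  rcases abs_cases (a - b) with ⟨h, _⟩ | ⟨h, _⟩ <;> rw [h] at h1 h2 ⊢ <;> omega
end

section
/- For every integer J with |J| > 1, the element A^3 B^{1-J} of the free group F(A,B) is not a proper power of any element, i.e., there is no g ∈ F(A,B) and k ≥ 2 with A^3 B^{1-J} = g^k. -/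
open Matrix

private def Smat : Matrix.SpecialLinearGroup (Fin 2) ℤ :=
  ⟨!![1, 2; 0, 1], by simp [Matrix.det_fin_two_of]⟩

private def Tmat (m : ℤ) : Matrix.SpecialLinearGroup (Fin 2) ℤ :=
  ⟨!![1, 0; 2 * m, 1], by simp [Matrix.det_fin_two_of]⟩

private lemma Tmat_mul (m n : ℤ) : Tmat m * Tmat n = Tmat (m + n) := by
  apply Subtype.ext
  show (!![1, 0; 2 * m, 1] : Matrix (Fin 2) (Fin 2) ℤ) * !![1, 0; 2 * n, 1] = _
  rw [Matrix.mul_fin_two]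
  norm_num [Tmat]
  ring_nf

private lemma Tmat_zero : Tmat 0 = 1 := by
  apply Subtype.ext
  simp [Tmat, Matrix.SpecialLinearGroup.coe_one, Matrix.one_fin_two]

private lemma Tmat_zpow (m : ℤ) : (Tmat 1) ^ m = Tmat m := by
  induction m using Int.induction_on with
  | zero => rw [zpow_zero, Tmat_zero]
  | succ n ih => rw [_root_.zpow_add_one, ih, Tmat_mul]
  | pred n ih =>
      rw [_root_.zpow_sub_one, ih]
      have hinv : (Tmat 1)⁻¹ = Tmat (-1) := by
        apply inv_eq_of_mul_eq_one_right
        rw [Tmat_mul]; norm_num [Tmat_zero]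
      rw [hinv, Tmat_mul, sub_eq_add_neg]

private lemma key (a b c d m : ℤ) (hm : m ≠ 0) (hdet : a * d - b * c = 1)
    (h1 : a^3 + 2*a*b*c + b*c*d = 1 + 12*m)
    (h2 : a^2*b + b^2*c + a*b*d + b*d^2 = 6)
    (h3 : a^2*c + a*c*d + b*c^2 + c*d^2 = 2*m)
    (h4 : a*b*c + 2*b*c*d + d^3 = 1) : False := by
  have hb : b * ((a+d)^2 - 1) = 6 := by linear_combination h2 + b * hdet
  have hc : c * ((a+d)^2 - 1) = 2*m := by linear_combination h3 + c * hdet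
  have hd : ((a+d)^2 - 1) * d - (a+d) = 1 := by linear_combination h4 + (a + 2*d) * hdet
  have ha : ((a+d)^2 - 1) * a - (a+d) = 1 + 12*m := by linear_combination h1 + (2*a + d) * hdet
  obtain ⟨t, ht⟩ : ∃ t, t = a + d := ⟨_, rfl⟩
  rw [← ht] at hb hc hd ha
  have hs0 : t^2 - 1 ≠ 0 := by
    intro h
    rw [h, mul_zero] at hb
    exact absurd hb (by norm_num)
  have hdvd : t^2 - 1 ∣ 6 := ⟨b, by linear_combination -hb⟩
  have h6 : t^2 - 1 ≤ 6 := Int.le_of_dvd (by norm_num) hdvd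
  have htl : -2 ≤ t := by nlinarith
  have htu : t ≤ 2 := by nlinarith
  interval_cases t <;> omega

/-- For `|J| > 1`, the element `A^3 B^{1-J}` of the free group `F(A,B)` is not a proper
power. -/
theorem stmt4 (J : ℤ) (hJ : 1 < |J|) :
    ¬ ∃ (g : FreeGroup (Fin 2)) (k : ℕ), 2 ≤ k ∧
      (FreeGroup.of 0 : FreeGroup (Fin 2)) ^ 3 * (FreeGroup.of 1) ^ (1 - J) = g ^ k := by
  rintro ⟨g, k, hk2, hx⟩
  have hm : (1 : ℤ) - J ≠ 0 := by
    rcases lt_abs.mp hJ with h | h <;> omega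
  -- Step 1: k = 3, via exponent sum of the first generator
  have hk3 : k = 3 := by
    have hψ := congrArg (FreeGroup.lift (![Multiplicative.ofAdd (1:ℤ), 1])) hx
    rw [_root_.map_mul, _root_.map_pow, map_zpow, _root_.map_pow] at hψ
    simp only [FreeGroup.lift_apply_of, Matrix.cons_val_zero, Matrix.cons_val_one,
      Matrix.head_cons, _root_.one_zpow, mul_one] at hψ
    have h3 : (3 : ℤ) = (k : ℤ) *
        Multiplicative.toAdd ((FreeGroup.lift (![Multiplicative.ofAdd (1:ℤ), 1])) g) := by
      have := congrArg Multiplicative.toAdd hψ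
      simpa [toAdd_pow, nsmul_eq_mul] using this
    have hdvd : (k : ℤ) ∣ 3 := ⟨_, h3⟩
    have hdvd' : k ∣ 3 := by exact_mod_cast hdvd
    rcases (Nat.dvd_prime Nat.prime_three).mp hdvd' with h | h <;> omega
  subst hk3
  -- Step 2: push into SL(2, ℤ)
  have hφ := congrArg (FreeGroup.lift (![Smat, Tmat 1])) hx
  rw [_root_.map_mul, _root_.map_pow, map_zpow, _root_.map_pow] at hφ
  simp only [FreeGroup.lift_apply_of, Matrix.cons_val_zero, Matrix.cons_val_one,
    Matrix.head_cons, Tmat_zpow] at hφ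
  set N := (FreeGroup.lift (![Smat, Tmat 1])) g with hN
  have hmat := congrArg (fun x : Matrix.SpecialLinearGroup (Fin 2) ℤ =>
    (x : Matrix (Fin 2) (Fin 2) ℤ)) hφ
  simp only [Matrix.SpecialLinearGroup.coe_mul, Matrix.SpecialLinearGroup.coe_pow] at hmat
  -- compute the left-hand side explicitly
  have hS : (Smat : Matrix (Fin 2) (Fin 2) ℤ) = !![1, 2; 0, 1] := rfl
  have hT : (Tmat (1 - J) : Matrix (Fin 2) (Fin 2) ℤ) = !![1, 0; 2 * (1 - J), 1] := rfl
  rw [hS, hT, pow_succ, pow_succ, pow_one, Matrix.mul_fin_two, Matrix.mul_fin_two,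
    Matrix.mul_fin_two] at hmat
  norm_num at hmat
  -- expand the right-hand side
  set M := (N : Matrix (Fin 2) (Fin 2) ℤ) with hMdef
  have hdet : M 0 0 * M 1 1 - M 0 1 * M 1 0 = 1 := by
    have := N.2
    rw [Matrix.det_fin_two] at this
    exact this
  have heta : M = !![M 0 0, M 0 1; M 1 0, M 1 1] := Matrix.eta_fin_two M
  rw [heta, pow_succ, pow_succ, pow_one, Matrix.mul_fin_two, Matrix.mul_fin_two] at hmat
  rw [← Matrix.ext_iff] at hmat
  have e00 := hmat 0 0
  have e01 := hmat 0 1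
  have e10 := hmat 1 0
  have e11 := hmat 1 1
  simp only [Matrix.cons_val_zero, Matrix.cons_val_one, Matrix.head_cons, Matrix.of_apply,
    Matrix.cons_val', Matrix.head_fin_const] at e00 e01 e10 e11
  exact key (M 0 0) (M 0 1) (M 1 0) (M 1 1) (1 - J) hm hdet
    (by linear_combination -e00) (by linear_combination -e01)
    (by linear_combination -e10) (by linear_combination -e11)
end

section
/- Let p be a positive integer, J an integer with J < -1, and m any integer. Define Δ₄ = ((2p+1)(J+1) - p)(m+2) - (2p+1). Then Δ₄ = ±1 if and only if (p, J, m) = (1, -2, -3), in which case Δ₄ = 1. -/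
/-- For `p > 0`, `J < -1`, and any `m`, `Δ₄ = ((2p+1)(J+1) - p)(m+2) - (2p+1)` equals `±1`
iff `(p, J, m) = (1, -2, -3)`, in which case `Δ₄ = 1`. -/
theorem stmt6 (p J m : ℤ) (hp : 0 < p) (hJ : J < -1) :
    ((((2*p + 1)*(J + 1) - p) * (m + 2) - (2*p + 1) = 1 ∨
      ((2*p + 1)*(J + 1) - p) * (m + 2) - (2*p + 1) = -1) ↔
        (p = 1 ∧ J = -2 ∧ m = -3)) ∧
    (p = 1 → J = -2 → m = -3 →
      ((2*p + 1)*(J + 1) - p) * (m + 2) - (2*p + 1) = 1) := by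
  have hJ2 : J + 1 ≤ -1 := by linarith
  have ha : (2*p + 1)*(J + 1) - p ≤ -(3*p + 1) := by nlinarith
  constructor
  · constructor
    · intro h
      set a := (2*p + 1)*(J + 1) - p with ha_def
      have haneg : a < 0 := by linarith
      rcases lt_trichotomy (m + 2) 0 with hq | hq | hq
      · -- m + 2 ≤ -1
        have hq1 : m + 2 ≤ -1 := by linarith
        have hmul : -(a * (m + 2)) ≤ (3*p + 1) * (m + 2) := by nlinarith
        have hmul2 : (3*p + 1) * (m + 2) ≤ -(3*p + 1) := by nlinarith
        rcases h with h | h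
        · -- a*(m+2) = 2p+2
          have hprod : a * (m + 2) = 2*p + 2 := by linarith
          have hp1 : p = 1 := by omega
          subst hp1
          have hq2 : m + 2 = -1 := by nlinarith
          have hJval : J = -2 := by
            have : a * (-1) = 4 := by rw [← hq2]; linarith [hprod]
            have ha4 : a = -4 := by linarith
            rw [ha_def] at ha4; nlinarith
          exact ⟨rfl, hJval, by linarith⟩
        · -- a*(m+2) = 2p
          exfalso
          have hprod : a * (m + 2) = 2*p := by linarith
          omega
      · exfalso; rw [hq] at h; simp at h; omega
      · exfalso
        have : a * (m + 2) < 0 := mul_neg_of_neg_of_pos haneg hq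
        rcases h with h | h <;> nlinarith
    · rintro ⟨h1, h2, h3⟩; subst h1; subst h2; subst h3; left; ring
  · intro h1 h2 h3; subst h1; subst h2; subst h3; ring
end

section
/- Let p be a positive integer, J an integer with |J| > 1, and m any integer. None of the following integers equals ±1: Δ₂ = (-(2p+1)J + p)(m+2) - (2p+1), Δ₃ = ((2p+1)J - p)(2m+1) + (2p+1)(m+1), and Δ₅ = ((2p+1)J - p)(m+2) + (2p+1). -/
lemma key_ne (a b c : ℤ) (hc : c ≠ 0) (h : |c| < |a|) : a * b ≠ c := by
  intro he
  rcases eq_or_ne b 0 with hb | hb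
  · rw [hb, mul_zero] at he; exact hc he.symm
  · have h1 : 1 ≤ |b| := Int.one_le_abs hb
    have h2 : |a| ≤ |c| := by
      rw [← he, abs_mul]
      nlinarith [abs_nonneg a]
    linarith

/-- For `p > 0`, `|J| > 1`, and any `m`, none of `Δ₂`, `Δ₃`, `Δ₅` equals `±1`. -/
theorem stmt7 (p J m : ℤ) (hp : 0 < p) (hJ : 1 < |J|) :
    ((-(2*p + 1)*J + p) * (m + 2) - (2*p + 1) ≠ 1 ∧
     (-(2*p + 1)*J + p) * (m + 2) - (2*p + 1) ≠ -1) ∧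
    (((2*p + 1)*J - p) * (2*m + 1) + (2*p + 1)*(m + 1) ≠ 1 ∧
     ((2*p + 1)*J - p) * (2*m + 1) + (2*p + 1)*(m + 1) ≠ -1) ∧
    (((2*p + 1)*J - p) * (m + 2) + (2*p + 1) ≠ 1 ∧
     ((2*p + 1)*J - p) * (m + 2) + (2*p + 1) ≠ -1) := by
  have hJ2 : 2 ≤ |J| := by omega
  have hqJ : |(2*p + 1) * J| = (2*p + 1) * |J| := by
    rw [abs_mul, abs_of_pos (show (0:ℤ) < 2*p+1 by linarith)]
  have hK : 3*p + 2 ≤ |(2*p + 1)*J - p| := by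
    have h1 := abs_sub_abs_le_abs_sub ((2*p + 1) * J) p
    rw [hqJ, abs_of_pos hp] at h1
    nlinarith [mul_le_mul_of_nonneg_left hJ2 (show (0:ℤ) ≤ 2*p+1 by linarith)]
  have hL : 8*p + 3 ≤ |2*((2*p + 1)*J) + 1| := by
    have h1 := abs_sub_abs_le_abs_sub (2*((2*p + 1) * J)) (-1 : ℤ)
    have h2 : |(2:ℤ)*((2*p+1)*J)| = 2*((2*p+1)*|J|) := by
      rw [abs_mul, hqJ]; norm_num
    rw [h2] at h1
    simp only [abs_neg, abs_one, sub_neg_eq_add] at h1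
    nlinarith [mul_le_mul_of_nonneg_left hJ2 (show (0:ℤ) ≤ 2*p+1 by linarith)]
  refine ⟨⟨?_, ?_⟩, ⟨?_, ?_⟩, ⟨?_, ?_⟩⟩ <;> intro h
  · exact key_ne ((2*p + 1)*J - p) (m + 2) (-(2*p + 2)) (by omega)
      (by rw [abs_neg, abs_of_pos (by linarith)]; linarith) (by linear_combination -h)
  · exact key_ne ((2*p + 1)*J - p) (m + 2) (-(2*p)) (by omega)
      (by rw [abs_neg, abs_of_pos (by linarith)]; linarith) (by linear_combination -h)
  · exact key_ne (2*((2*p + 1)*J) + 1) (2*m + 1) (1 - 2*p) (by omega)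
      (by rw [abs_of_nonpos (by linarith)]; linarith) (by linear_combination 2*h)
  · exact key_ne (2*((2*p + 1)*J) + 1) (2*m + 1) (-(2*p + 3)) (by omega)
      (by rw [abs_neg, abs_of_pos (by linarith)]; linarith) (by linear_combination 2*h)
  · exact key_ne ((2*p + 1)*J - p) (m + 2) (-(2*p)) (by omega)
      (by rw [abs_neg, abs_of_pos (by linarith)]; linarith) (by linear_combination h)
  · exact key_ne ((2*p + 1)*J - p) (m + 2) (-(2*p + 2)) (by omega)
      (by rw [abs_neg, abs_of_pos (by linarith)]; linarith) (by linear_combination h)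
end

section
/- Let p be a positive integer, J an integer with J < -1, and m any integer. Then Δ₆ = ((2p+1)(J+1) - p)(2m+1) - (2p+1)(m+1) is never equal to 1 or -1. -/
/-- For `p > 0`, `J < -1`, and any `m`,
`Δ₆ = ((2p+1)(J+1) - p)(2m+1) - (2p+1)(m+1)` is never `±1`. -/
theorem stmt8 (p J m : ℤ) (hp : 0 < p) (hJ : J < -1) :
    ((2*p + 1)*(J + 1) - p) * (2*m + 1) - (2*p + 1)*(m + 1) ≠ 1 ∧
    ((2*p + 1)*(J + 1) - p) * (2*m + 1) - (2*p + 1)*(m + 1) ≠ -1 := by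
  have key : ∀ d : ℤ, ((2*p + 1)*(J + 1) - p) * (2*m + 1) - (2*p + 1)*(m + 1) = d →
      (2*m + 1) * ((2*p+1)*(2*J+1) - 2*p) = 2*d + (2*p+1) := by
    intro d h; linarith [h, mul_comm (2*m+1) ((2*p+1)*(2*J+1) - 2*p)]
  have hc : (2*p+1)*(2*J+1) - 2*p ≤ -(8*p+3) := by nlinarith
  constructor <;> intro h <;> have hk := key _ h
  · rcases le_or_gt (2*m+1) (-1) with hm | hm
    · nlinarith
    · have hm' : 0 ≤ 2*m := by omega
      nlinarith
  · rcases le_or_gt (2*m+1) (-1) with hm | hm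
    · nlinarith
    · have hm' : 0 ≤ 2*m := by omega
      nlinarith
end

section
/- For integers n ≥ 2 and 1 ≤ p < n, the image of R = AⁿB² under the automorphism of F(A,B) fixing A and sending B ↦ BA^{-p} is conjugate to A^{n-p} B A^{-p} B, and this element has cyclically reduced length n + 2 (the same as R). -/
set_option linter.unusedSectionVars false
open FreeGroup List

variable {α : Type*} [DecidableEq α]

/-- inverse of a single letter -/
def inv1 (x : α × Bool) : α × Bool := (x.1, !x.2)

@[simp] lemma inv1_inv1 (x : α × Bool) : inv1 (inv1 x) = x := by simp [inv1]

/-- `NC x y` : the adjacent pair `x, y` does not cancel. -/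
def NC (x y : α × Bool) : Prop := y ≠ inv1 x

lemma cancel_iff (x y : α × Bool) : (x.1 = y.1 ∧ x.2 = !y.2) ↔ y = inv1 x := by
  obtain ⟨x1, x2⟩ := x; obtain ⟨y1, y2⟩ := y
  simp [inv1, Prod.ext_iff]
  cases x2 <;> cases y2 <;> simp [and_comm, eq_comm]

lemma nc_inv (x y : α × Bool) : NC (inv1 y) (inv1 x) ↔ NC x y := by
  simp only [NC, inv1_inv1, ne_eq]
  exact ne_comm

/-- A word is `Reduced` iff no adjacent pair cancels. -/
abbrev Reduced (L : List (α × Bool)) : Prop := List.IsChain NC L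

lemma reduce_eq_self_of_reduced : ∀ {L : List (α × Bool)}, Reduced L → reduce L = L := by
  intro L
  induction L with
  | nil => intro _; rfl
  | cons x L ih =>
    intro h
    replace h := List.isChain_cons.1 h
    rw [reduce.cons, ih h.2]
    cases L with
    | nil => rfl
    | cons hd tl =>
      have : ¬(x.1 = hd.1 ∧ x.2 = !hd.2) := by
        rw [cancel_iff]
        exact h.1 hd rfl
      simp only [this, if_false]

lemma exists_cancel_of_not_reduced :
    ∀ {M : List (α × Bool)}, ¬ Reduced M →
      ∃ (L₁ : List (α × Bool)) (y : α × Bool) (L₂ : List (α × Bool)),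
        M = L₁ ++ y :: inv1 y :: L₂ := by
  intro M
  induction M with
  | nil => intro h; exact absurd List.isChain_nil h
  | cons a M ih =>
    intro h
    cases M with
    | nil => exact absurd (List.isChain_singleton a) h
    | cons b M' =>
      by_cases hab : NC a b
      · have : ¬ Reduced (b :: M') := fun hc => h (List.isChain_cons_cons.2 ⟨hab, hc⟩)
        obtain ⟨L₁, y, L₂, hL⟩ := ih this
        exact ⟨a :: L₁, y, L₂, by rw [hL]; rfl⟩
      · have hb : b = inv1 a := by by_contra hb; exact hab hb
        exact ⟨[], a, M', by rw [hb]; rfl⟩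

lemma reduced_reduce (L : List (α × Bool)) : Reduced (reduce L) := by
  by_contra h
  obtain ⟨L₁, y, L₂, hL⟩ := exists_cancel_of_not_reduced h
  exact reduce.not (x := y.1) (b := y.2) (by rw [hL]; rfl)

/-- cyclically reduced -/
abbrev Cyc (L : List (α × Bool)) : Prop := Reduced (L ++ L)

lemma Cyc.reduced {L : List (α × Bool)} (h : Cyc L) : Reduced L :=
  List.IsChain.prefix h ⟨L, rfl⟩

lemma invRev_cons (x : α × Bool) (L : List (α × Bool)) :
    invRev (x :: L) = invRev L ++ [inv1 x] := by
  simp [invRev, inv1]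

lemma reduced_invRev {L : List (α × Bool)} (h : Reduced L) : Reduced (invRev L) := by
  show List.IsChain NC (List.map _ L).reverse
  rw [List.isChain_reverse]
  exact List.isChain_map_of_isChain _ (fun a b hab => (nc_inv a b).2 hab) h

lemma cyc_three {L : List (α × Bool)} (h : Cyc L) : Reduced (L ++ L ++ L) := by
  rcases eq_or_ne L [] with rfl | hL
  · exact List.isChain_nil
  show List.IsChain NC (L ++ L ++ L)
  rw [List.isChain_append]
  refine ⟨h, List.IsChain.suffix h ⟨L, rfl⟩, ?_⟩
  have hj := (List.isChain_append.1 h).2.2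
  intro x hx y hy
  rw [List.getLast?_append_of_ne_nil _ hL] at hx
  exact hj x hx y hy

lemma Cyc.rotate {a : α × Bool} {l : List (α × Bool)} (h : Cyc (a :: l)) :
    Cyc (l ++ [a]) := by
  apply List.IsChain.infix (cyc_three h)
  exact ⟨[a], l, by simp⟩

lemma Cyc.rotate' {a : α × Bool} {l : List (α × Bool)} (h : Cyc (l ++ [a])) :
    Cyc (a :: l) := by
  apply List.IsChain.infix (cyc_three h)
  exact ⟨l, [a], by simp⟩
lemma red_to {W T : List (α × Bool)} (h1 : Red W T) (h2 : Reduced T) : reduce W = T := by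
  rw [reduce.eq_of_red h1, reduce_eq_self_of_reduced h2]

lemma step_not (L₁ L₂ : List (α × Bool)) (y : α × Bool) :
    Red (L₁ ++ y :: inv1 y :: L₂) (L₁ ++ L₂) :=
  Relation.ReflTransGen.single (by
    have : y :: inv1 y :: L₂ = (y.1, y.2) :: (y.1, !y.2) :: L₂ := by simp [inv1]
    rw [this]
    exact Red.Step.not)

lemma step_conj (x : α × Bool) (u c : List (α × Bool))
    (hred : Reduced (u ++ c ++ invRev u)) (hc : Cyc c) :
    ∃ u' c', reduce ([x] ++ (u ++ c ++ invRev u) ++ [inv1 x]) = u' ++ c' ++ invRev u' ∧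
      Cyc c' ∧ c'.length = c.length := by
  cases u with
  | cons y u₂ =>
    by_cases hy : y = inv1 x
    · -- cancellation on both sides
      refine ⟨u₂, c, ?_, hc, rfl⟩
      have hT : Reduced (u₂ ++ c ++ invRev u₂) := by
        apply List.IsChain.infix hred
        refine ⟨[y], [inv1 y], ?_⟩
        simp [_root_.invRev_cons, List.append_assoc]
      have e1 : [x] ++ ((y :: u₂) ++ c ++ invRev (y :: u₂)) ++ [inv1 x] =
          [] ++ x :: inv1 x :: ((u₂ ++ c ++ invRev u₂) ++ x :: inv1 x :: []) := by
        subst hy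
        simp [_root_.invRev_cons, List.append_assoc]
      have r1 : Red ([x] ++ ((y :: u₂) ++ c ++ invRev (y :: u₂)) ++ [inv1 x])
          ((u₂ ++ c ++ invRev u₂) ++ x :: inv1 x :: []) := by
        rw [e1]
        exact step_not _ _ _
      have r2 : Red ((u₂ ++ c ++ invRev u₂) ++ x :: inv1 x :: [])
          (u₂ ++ c ++ invRev u₂) := by
        have := step_not (u₂ ++ c ++ invRev u₂) ([] : List (α × Bool)) x
        simpa using this
      exact red_to (r1.trans r2) hT
    · -- no cancellation at all
      refine ⟨x :: (y :: u₂), c, ?_, hc, rfl⟩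
      have hform : [x] ++ ((y :: u₂) ++ c ++ invRev (y :: u₂)) ++ [inv1 x] =
          (x :: (y :: u₂)) ++ c ++ invRev (x :: (y :: u₂)) := by
        simp [_root_.invRev_cons, List.append_assoc]
      rw [hform]
      apply red_to Red.refl
      rw [← hform]
      -- Reduced (x :: (M ++ [inv1 x])) where M = (y::u₂) ++ c ++ invRev (y::u₂)
      show List.IsChain NC (x :: (((y :: u₂) ++ c ++ invRev (y :: u₂)) ++ [inv1 x]))
      rw [List.isChain_cons]
      constructor
      · intro z hz
        simp [_root_.invRev_cons] at hz
        subst hz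
        exact hy
      · rw [List.isChain_append]
        refine ⟨hred, List.isChain_singleton _, ?_⟩
        intro a ha b hb
        simp at hb
        subst hb
        have : ((y :: u₂) ++ c ++ invRev (y :: u₂)) =
            ((y :: u₂) ++ c ++ invRev u₂) ++ [inv1 y] := by
          simp [_root_.invRev_cons, List.append_assoc]
        rw [this, List.getLast?_concat] at ha
        simp at ha
        subst ha
        exact (nc_inv x y).2 hy
  | nil =>
    simp only [invRev_empty, List.append_nil, List.nil_append]
    cases c with
    | nil =>
      refine ⟨[], [], ?_, List.isChain_nil, rfl⟩
      simp only [invRev_empty, List.append_nil, List.nil_append]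
      exact red_to (by simpa using step_not [] [] x) List.isChain_nil
    | cons z c₂ =>
      have hne : (z :: c₂ : List (α × Bool)) ≠ [] := by simp
      obtain ⟨c₀, w, hcw⟩ : ∃ c₀ w, z :: c₂ = c₀ ++ [w] :=
        ⟨(z :: c₂).dropLast, (z :: c₂).getLast hne, (List.dropLast_append_getLast hne).symm⟩
      by_cases hz : z = inv1 x
      · -- cancellation on the left, rotate
        refine ⟨[], c₂ ++ [inv1 x], ?_, ?_, by simp⟩
        · have hrot : Cyc (c₂ ++ [inv1 x]) := by
            rw [← hz]; exact Cyc.rotate (hz ▸ hc)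
          have : ([x] ++ (z :: c₂) ++ [inv1 x]) = [] ++ x :: inv1 x :: (c₂ ++ [inv1 x]) := by
            subst hz; simp
          rw [this]
          simpa using red_to (step_not [] (c₂ ++ [inv1 x]) x) hrot.reduced
        · rw [← hz]; exact Cyc.rotate (hz ▸ hc)
      · by_cases hw : w = x
        · -- cancellation on the right, rotate backwards
          refine ⟨[], x :: c₀, ?_, ?_, ?_⟩
          · have hrot : Cyc (x :: c₀) := by
              apply Cyc.rotate'
              rw [← hw, ← hcw]; exact hc
            have : ([x] ++ (z :: c₂) ++ [inv1 x]) = (x :: c₀) ++ x :: inv1 x :: [] := by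
              rw [hcw, hw]; simp
            rw [this]
            have := step_not (x :: c₀) ([] : List (α × Bool)) x
            rw [red_to (W := (x :: c₀) ++ x :: inv1 x :: []) (by simpa using this) hrot.reduced]
            simp
          · apply Cyc.rotate'
            rw [← hw, ← hcw]; exact hc
          · have : (z :: c₂).length = (c₀ ++ [w]).length := by rw [hcw]
            simp at this ⊢
            omega
        · -- no cancellation
          refine ⟨[x], z :: c₂, ?_, hc, rfl⟩
          have hform : ([x] ++ (z :: c₂) ++ [inv1 x]) = [x] ++ (z :: c₂) ++ invRev [x] := by
            simp [_root_.invRev_cons, invRev_empty]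
          rw [hform]
          apply red_to Red.refl
          rw [← hform]
          show List.IsChain NC (x :: ((z :: c₂) ++ [inv1 x]))
          rw [List.isChain_cons]
          constructor
          · intro a ha
            simp at ha
            subst ha
            exact hz
          · rw [List.isChain_append]
            refine ⟨hc.reduced, List.isChain_singleton _, ?_⟩
            intro a ha b hb
            simp at hb
            subst hb
            rw [hcw, List.getLast?_concat] at ha
            simp at ha
            subst ha
            intro habs
            exact hw (by
              have := congrArg inv1 habs
              simpa using this.symm)

lemma conj_reduce (H C : List (α × Bool)) (hc : Cyc C) :
    ∃ u c, reduce (H ++ C ++ invRev H) = u ++ c ++ invRev u ∧ Cyc c ∧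
      c.length = C.length := by
  induction H with
  | nil =>
    refine ⟨[], C, ?_, hc, rfl⟩
    simp only [invRev_empty, List.append_nil, List.nil_append]
    exact reduce_eq_self_of_reduced hc.reduced
  | cons x H' ih =>
    obtain ⟨u, c, h1, h2, h3⟩ := ih
    have hred : Reduced (u ++ c ++ invRev u) := h1 ▸ reduced_reduce _
    obtain ⟨u', c', g1, g2, g3⟩ := step_conj x u c hred h2
    refine ⟨u', c', ?_, g2, by omega⟩
    have hr : Red ((x :: H') ++ C ++ invRev (x :: H'))
        ([x] ++ (u ++ c ++ invRev u) ++ [inv1 x]) := by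
      have e : (x :: H') ++ C ++ invRev (x :: H') =
          [x] ++ (H' ++ C ++ invRev H') ++ [inv1 x] := by
        simp [_root_.invRev_cons, List.append_assoc]
      rw [e]
      exact Red.append_append (Red.append_append Red.refl (h1 ▸ reduce.red)) Red.refl
    rw [reduce.eq_of_red hr, g1]

lemma conj_toWord_le (g h : FreeGroup α) (hg : Cyc g.toWord) :
    g.toWord.length ≤ (h * g * h⁻¹).toWord.length := by
  have e : h * g * h⁻¹ = mk (h.toWord ++ g.toWord ++ invRev h.toWord) := by
    conv_lhs => rw [← mk_toWord (x := h), ← mk_toWord (x := g)]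
    rw [inv_mk, mul_mk, mul_mk]
  rw [e, toWord_mk]
  obtain ⟨u, c, h1, _, h3⟩ := conj_reduce h.toWord g.toWord hg
  rw [h1]
  simp only [List.length_append, invRev_length]
  omega

lemma chain'_replicate_append (k : ℕ) (x : α × Bool) (l : List (α × Bool))
    (hx : NC x x) (hl : List.IsChain NC l) (hhd : ∀ y ∈ l.head?, NC x y) :
    List.IsChain NC (List.replicate k x ++ l) := by
  induction k with
  | zero => simpa
  | succ k ih =>
    rw [List.replicate_succ, List.cons_append, List.isChain_cons]
    refine ⟨?_, ih⟩
    cases k with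
    | zero => simpa using hhd
    | succ k =>
      rw [List.replicate_succ]
      intro y hy
      simp at hy
      subst hy
      exact hx

/-- The word `A^m B A'^p B`. -/
def Wd (m p : ℕ) : List (Fin 2 × Bool) :=
  List.replicate m ((0 : Fin 2), true) ++ ((1 : Fin 2), true) ::
    (List.replicate p ((0 : Fin 2), false) ++ [((1 : Fin 2), true)])

lemma seg (m p : ℕ) (l : List (Fin 2 × Bool))
    (hl : List.IsChain NC (((1 : Fin 2), true) :: l)) :
    List.IsChain NC (List.replicate m ((0 : Fin 2), true) ++ ((1 : Fin 2), true) ::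
      (List.replicate p ((0 : Fin 2), false) ++ ((1 : Fin 2), true) :: l)) := by
  apply chain'_replicate_append _ _ _ (by simp only [NC, inv1]; decide)
  · rw [List.isChain_cons]
    refine ⟨?_, ?_⟩
    · cases p with
      | zero => intro y hy; simp at hy; subst hy; simp only [NC, inv1]; decide
      | succ p =>
        rw [List.replicate_succ]
        intro y hy; simp at hy; subst hy; simp only [NC, inv1]; decide
    · apply chain'_replicate_append _ _ _ (by simp only [NC, inv1]; decide) hl
      intro y hy; simp at hy; subst hy; simp only [NC, inv1]; decide
  · intro y hy; simp at hy; subst hy; simp only [NC, inv1]; decide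

lemma chain_Wd (m p : ℕ) : List.IsChain NC (Wd m p) := by
  have := seg m p [] (List.isChain_singleton _)
  simpa [Wd] using this

lemma cyc_Wd (m p : ℕ) (hm : 1 ≤ m) : Cyc (Wd m p) := by
  show List.IsChain NC (Wd m p ++ Wd m p)
  have e : Wd m p ++ Wd m p = List.replicate m ((0 : Fin 2), true) ++ ((1 : Fin 2), true) ::
      (List.replicate p ((0 : Fin 2), false) ++ ((1 : Fin 2), true) :: Wd m p) := by
    simp [Wd, List.append_assoc]
  rw [e]
  apply seg
  rw [List.isChain_cons]
  refine ⟨?_, chain_Wd m p⟩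
  obtain ⟨k, rfl⟩ : ∃ k, m = k + 1 := ⟨m - 1, by omega⟩
  rw [Wd, List.replicate_succ]
  intro y hy; simp at hy; subst hy; simp only [NC, inv1]; decide

lemma w_eq (m p : ℕ) :
    (FreeGroup.of (0 : Fin 2)) ^ m * FreeGroup.of 1 * ((FreeGroup.of (0 : Fin 2)) ^ p)⁻¹ *
      FreeGroup.of 1 = mk (Wd m p) := by
  have h1 : (FreeGroup.of (0 : Fin 2)) ^ m = mk (List.replicate m ((0 : Fin 2), true)) := by
    rw [← toWord_of_pow, mk_toWord]
  have h2 : ((FreeGroup.of (0 : Fin 2)) ^ p)⁻¹ = mk (List.replicate p ((0 : Fin 2), false)) := by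
    rw [show (FreeGroup.of (0 : Fin 2)) ^ p = mk (List.replicate p ((0 : Fin 2), true)) by
      rw [← toWord_of_pow, mk_toWord], inv_mk]
    congr 1
    simp [invRev, List.map_replicate]
  have h3 : FreeGroup.of (1 : Fin 2) = mk [((1 : Fin 2), true)] := rfl
  rw [h1, h2, h3, mul_mk, mul_mk, mul_mk]
  congr 1
  simp [Wd]

lemma toWord_Wd (m p : ℕ) : (mk (Wd m p)).toWord = Wd m p := by
  rw [toWord_mk, reduce_eq_self_of_reduced (chain_Wd m p)]

lemma len_Wd (m p : ℕ) : (Wd m p).length = m + p + 2 := by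
  simp [Wd]
  omega

/-- The cyclically reduced length of an element of `F(A,B)`: the minimal length of a
reduced word in its conjugacy class. -/
noncomputable def cyclen (g : FreeGroup (Fin 2)) : ℕ :=
  sInf {k : ℕ | ∃ h : FreeGroup (Fin 2), k = ((h * g * h⁻¹).toWord).length}

/-- For `n ≥ 2` and `1 ≤ p < n`, the image of `R = Aⁿ B²` under the endomorphism fixing
`A` and sending `B ↦ B A^{-p}` is conjugate to `A^{n-p} B A^{-p} B`, which has cyclically
reduced length `n + 2`. -/
theorem stmt12 (n p : ℕ) (hn : 2 ≤ n) (hp : 1 ≤ p) (hpn : p < n)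
    (φ : FreeGroup (Fin 2) →* FreeGroup (Fin 2))
    (hA : φ (FreeGroup.of 0) = FreeGroup.of 0)
    (hB : φ (FreeGroup.of 1) = FreeGroup.of 1 * (FreeGroup.of 0) ^ (-(p : ℤ))) :
    IsConj (φ ((FreeGroup.of 0) ^ n * (FreeGroup.of 1) ^ 2))
      ((FreeGroup.of 0 : FreeGroup (Fin 2)) ^ ((n : ℤ) - p) * FreeGroup.of 1 *
        (FreeGroup.of 0) ^ (-(p : ℤ)) * FreeGroup.of 1) ∧
    cyclen ((FreeGroup.of 0 : FreeGroup (Fin 2)) ^ ((n : ℤ) - p) * FreeGroup.of 1 *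
        (FreeGroup.of 0) ^ (-(p : ℤ)) * FreeGroup.of 1) = n + 2 := by
  set w : FreeGroup (Fin 2) := (FreeGroup.of 0 : FreeGroup (Fin 2)) ^ ((n : ℤ) - p) *
      FreeGroup.of 1 * (FreeGroup.of 0) ^ (-(p : ℤ)) * FreeGroup.of 1 with hw
  have hzw : w = mk (Wd (n - p) p) := by
    rw [hw, show ((n : ℤ) - p) = ((n - p : ℕ) : ℤ) by push_cast; omega,
      zpow_natCast, zpow_neg, zpow_natCast]
    exact w_eq (n - p) p
  have htw : w.toWord = Wd (n - p) p := by rw [hzw, toWord_Wd]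
  have hlen : (Wd (n - p) p).length = n + 2 := by rw [len_Wd]; omega
  constructor
  · have hφ : φ ((FreeGroup.of 0) ^ n * (FreeGroup.of 1) ^ 2) =
        (FreeGroup.of (0 : Fin 2)) ^ n * (FreeGroup.of 1 * (FreeGroup.of 0) ^ (-(p : ℤ))) ^ 2 := by
      rw [_root_.map_mul φ, _root_.map_pow φ, _root_.map_pow φ, hA, hB]
    rw [hφ, isConj_iff]
    refine ⟨(FreeGroup.of (0 : Fin 2)) ^ (-(p : ℤ)), ?_⟩
    rw [hw, sq]
    group
  · have hmem : (n + 2) ∈ {k : ℕ | ∃ h : FreeGroup (Fin 2),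
        k = ((h * w * h⁻¹).toWord).length} := by
      refine ⟨1, ?_⟩
      rw [one_mul, inv_one, mul_one, htw, hlen]
    refine le_antisymm (Nat.sInf_le hmem) (le_csInf ⟨_, hmem⟩ ?_)
    rintro k ⟨h, rfl⟩
    calc n + 2 = w.toWord.length := by rw [htw, hlen]
      _ ≤ _ := conj_toWord_le w h (by rw [htw]; exact cyc_Wd (n - p) p (by omega))
end
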